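/- arXiv:0806.0680 — 4 statements merged into one kernel-verified Lean document; each statement's English description precedes it below -/
import Mathlib

section
/- For the symmetric group Sym_n, the identity \sum_{J \subseteq S} [Sym_n : W_J] (q-1)^{|J|} = \sum_{w \in Sym_n} q^{des(w)} holds, where S is the set of simple transpositions, W_J the parabolic (Young) subgroup generated by J, and des(w) the number of descents of w. -/
/-!
Every left coset of the Young subgroup `W_J` contains exactly one permutation without descents
in `J`. Existence: a maximiser of `∑ k, k * w k` on the coset has no such descent, since
right-multiplying by `s_i` at a descent `i` increases the sum. Uniqueness: two such
permutations differ by an element of `W_J`, which preserves the blocks cut out by `J`, and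
monotonicity on each block forces that element to be the identity. Hence
`[Sym_{n+1} : W_J] = #{w | J ⊆ Asc w}`, and exchanging the two sums gives
`∑_w ∑_{J ⊆ Asc w} (q - 1)^|J| = ∑_w q^|Asc w|`; finally `w ↦ w ∘ rev` turns ascents into
descents.
-/

open scoped Classical
open Polynomial

/-- The Young (parabolic) subgroup of `Sym_{n+1}` generated by the simple
transpositions `s_i = (i, i+1)` for `i ∈ J`. -/
def youngSubgroup {n : ℕ} (J : Finset (Fin n)) : Subgroup (Equiv.Perm (Fin (n + 1))) :=
  Subgroup.closure {g | ∃ i ∈ J, g = Equiv.swap (Fin.castSucc i) (Fin.succ i)}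

/-- The number of descents of `w ∈ Sym_{n+1}`. -/
noncomputable def des {n : ℕ} (w : Equiv.Perm (Fin (n + 1))) : ℕ :=
  (Finset.univ.filter fun i : Fin n => w (Fin.succ i) < w (Fin.castSucc i)).card

open Finset Equiv

section PositionWeight

variable {m : ℕ}

def positionWeight (g : Perm (Fin m)) : ℤ :=
  ∑ k : Fin m, (k : ℤ) * (g k : ℤ)

lemma positionWeight_mul_swap (g : Perm (Fin m)) {a b : Fin m} (hab : a ≠ b) :
    positionWeight (g * swap a b) = positionWeight g + ((b : ℤ) - a) * ((g a : ℤ) - g b) := by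
  have hreindex : positionWeight (g * swap a b) = ∑ k, (swap a b k : ℤ) * (g k : ℤ) := by
    rw [positionWeight, ← Equiv.sum_comp (swap a b)]
    simp only [Perm.mul_apply, swap_apply_self]
  rw [hreindex, positionWeight, ← sub_eq_iff_eq_add', ← Finset.sum_sub_distrib,
    Fintype.sum_eq_add a b hab]
  · simp only [swap_apply_left, swap_apply_right]
    ring
  · rintro k ⟨hka, hkb⟩
    rw [swap_apply_of_ne_of_ne hka hkb, sub_self]

lemma positionWeight_lt_mul_swap (g : Perm (Fin m)) {a b : Fin m} (hab : a < b)
    (hg : g b < g a) : positionWeight g < positionWeight (g * swap a b) := by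
  rw [positionWeight_mul_swap g hab.ne]
  have hab' : (a : ℤ) < b := by exact_mod_cast hab
  have hg' : (g b : ℤ) < g a := by exact_mod_cast hg
  nlinarith

end PositionWeight

variable {n : ℕ}

def ascentSet (w : Perm (Fin (n + 1))) : Finset (Fin n) :=
  univ.filter fun i => w i.castSucc < w i.succ

lemma card_ascentSet_eq_des_mul_revPerm (w : Perm (Fin (n + 1))) :
    #(ascentSet w) = des (w * Fin.revPerm) := by
  refine card_nbij' Fin.rev Fin.rev ?_ ?_ (fun i _ => Fin.rev_rev i) (fun i _ => Fin.rev_rev i)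
  all_goals
    intro i
    simp [ascentSet, Fin.rev_succ, Fin.rev_castSucc]

section Blocks

variable (J : Finset (Fin n))

/-- `blockIndex J k` counts the `i ∉ J` with `i < k`; its fibres are the blocks, i.e. the orbits
of `youngSubgroup J`. -/
def blockIndex : Fin (n + 1) → ℕ :=
  Fin.induction 0 fun i b => if i ∈ J then b else b + 1

lemma blockIndex_succ (i : Fin n) :
    blockIndex J i.succ =
      if i ∈ J then blockIndex J i.castSucc else blockIndex J i.castSucc + 1 :=
  Fin.induction_succ _ _ i

lemma blockIndex_succ_eq_iff (i : Fin n) :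
    blockIndex J i.succ = blockIndex J i.castSucc ↔ i ∈ J := by
  rw [blockIndex_succ]
  split_ifs with hi <;> simp [hi]

lemma monotone_blockIndex : Monotone (blockIndex J) :=
  Fin.monotone_iff_le_succ.2 fun i => by
    rw [blockIndex_succ]
    split_ifs <;> omega

variable {J}

lemma blockIndex_swap {i : Fin n} (hi : i ∈ J) (k : Fin (n + 1)) :
    blockIndex J (swap i.castSucc i.succ k) = blockIndex J k := by
  have h := (blockIndex_succ_eq_iff J i).2 hi
  rcases eq_or_ne k i.castSucc with rfl | h₁
  · rw [swap_apply_left, h]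
  rcases eq_or_ne k i.succ with rfl | h₂
  · rw [swap_apply_right, h]
  · rw [swap_apply_of_ne_of_ne h₁ h₂]

lemma blockIndex_apply_of_mem_youngSubgroup {u : Perm (Fin (n + 1))} (hu : u ∈ youngSubgroup J)
    (k : Fin (n + 1)) : blockIndex J (u k) = blockIndex J k := by
  induction hu using Subgroup.closure_induction generalizing k with
  | mem g hg =>
    obtain ⟨i, hi, rfl⟩ := hg
    exact blockIndex_swap hi k
  | one => rfl
  | mul u v _ _ hu hv => rw [Perm.mul_apply, hu, hv]
  | inv u _ hu => rw [← hu, ← Perm.mul_apply, mul_inv_cancel, Perm.one_apply]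

lemma strictMonoOn_blockIndex_fiber {w : Perm (Fin (n + 1))} (hw : J ⊆ ascentSet w) (c : ℕ) :
    StrictMonoOn w (blockIndex J ⁻¹' {c}) := by
  refine strictMonoOn_of_lt_succ (Set.ordConnected_singleton.preimage_mono
    (monotone_blockIndex J)) fun k hk hkc hsc => ?_
  obtain ⟨i, rfl⟩ := (Fin.exists_castSucc_eq (i := k)).2 (by rintro rfl; exact hk isMax_top)
  rw [Fin.orderSucc_castSucc] at hsc ⊢
  have hi : i ∈ J := (blockIndex_succ_eq_iff J i).1 (hsc.trans hkc.symm)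
  exact (Finset.mem_filter.1 (hw hi)).2

end Blocks

section CosetRepresentatives

variable {J : Finset (Fin n)}

lemma eq_of_inv_mul_mem_youngSubgroup {w w' : Perm (Fin (n + 1))} (hw : J ⊆ ascentSet w)
    (hw' : J ⊆ ascentSet w') (h : w⁻¹ * w' ∈ youngSubgroup J) : w = w' := by
  set u := w⁻¹ * w'
  have hu : ∀ k, blockIndex J (u k) = blockIndex J k := blockIndex_apply_of_mem_youngSubgroup h
  have hw'u : ∀ k, w' k = w (u k) := fun k => by simp [u]
  have hmono : StrictMono u := by
    intro a b hab
    rcases (monotone_blockIndex J hab.le).lt_or_eq with hlt | heq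
    · exact (monotone_blockIndex J).reflect_lt (by rwa [hu, hu])
    · rw [← (strictMonoOn_blockIndex_fiber hw (blockIndex J a)).lt_iff_lt (hu a)
        ((hu b).trans heq.symm), ← hw'u, ← hw'u]
      exact strictMonoOn_blockIndex_fiber hw' _ rfl heq.symm hab
  exact inv_mul_eq_one.1 (Perm.ext (congrFun hmono.eq_id))

lemma exists_subset_ascentSet_mk_eq (g : Perm (Fin (n + 1))) :
    ∃ w, J ⊆ ascentSet w ∧ (w : Perm (Fin (n + 1)) ⧸ youngSubgroup J) = g := by
  obtain ⟨w, hw, hmax⟩ := (univ.filter fun w : Perm (Fin (n + 1)) =>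
      (w : Perm (Fin (n + 1)) ⧸ youngSubgroup J) = g).exists_max_image positionWeight
    ⟨g, mem_filter.2 ⟨mem_univ _, rfl⟩⟩
  have hwg := (mem_filter.1 hw).2
  refine ⟨w, fun i hi => mem_filter.2 ⟨mem_univ _, ?_⟩, hwg⟩
  have hs : swap i.castSucc i.succ ∈ youngSubgroup J := Subgroup.subset_closure ⟨i, hi, rfl⟩
  have hcoset : (↑(w * swap i.castSucc i.succ) : Perm (Fin (n + 1)) ⧸ youngSubgroup J) = g := by
    rw [QuotientGroup.mk_mul_of_mem _ hs, hwg]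
  refine (lt_or_gt_of_ne (w.injective.ne Fin.castSucc_lt_succ.ne)).resolve_right fun hdesc => ?_
  exact (hmax _ (mem_filter.2 ⟨mem_univ _, hcoset⟩)).not_gt
    (positionWeight_lt_mul_swap w Fin.castSucc_lt_succ hdesc)

variable (J) in
lemma index_youngSubgroup :
    (youngSubgroup J).index = #(univ.filter fun w : Perm (Fin (n + 1)) => J ⊆ ascentSet w) := by
  rw [Subgroup.index, ← Fintype.card_coe, ← Nat.card_eq_fintype_card]
  refine (Nat.card_eq_of_bijective (fun w => (w.1 : Perm (Fin (n + 1)) ⧸ youngSubgroup J))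
    ⟨?_, fun q => ?_⟩).symm
  · rintro ⟨w, hw⟩ ⟨w', hw'⟩ h
    exact Subtype.ext (eq_of_inv_mul_mem_youngSubgroup (mem_filter.1 hw).2 (mem_filter.1 hw').2
      (QuotientGroup.eq.1 h))
  · obtain ⟨g, rfl⟩ := QuotientGroup.mk_surjective q
    obtain ⟨w, hw, hwg⟩ := exists_subset_ascentSet_mk_eq (J := J) g
    exact ⟨⟨w, mem_filter.2 ⟨mem_univ _, hw⟩⟩, hwg⟩

end CosetRepresentatives

lemma sum_powerset_sub_one_pow {ι : Type*} (s : Finset ι) :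
    ∑ t ∈ s.powerset, ((X : ℤ[X]) - 1) ^ #t = X ^ #s := by
  simpa using sum_pow_mul_eq_add_pow ((X : ℤ[X]) - 1) 1 s

/-- For the symmetric group `Sym_{n+1}`, the identity
`∑_{J ⊆ S} [Sym_{n+1} : W_J] (q-1)^{|J|} = ∑_{w} q^{des(w)}` holds in `ℤ[q]`, where `S`
is the set of simple transpositions, `W_J` the Young subgroup generated by `J`, and
`des(w)` the number of descents of `w`. -/
theorem sum_parabolic_index_eq_sum_descents (n : ℕ) :
    ∑ J ∈ (Finset.univ : Finset (Fin n)).powerset,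
        ((youngSubgroup J).index : Polynomial ℤ) * (X - 1) ^ J.card =
      ∑ w : Equiv.Perm (Fin (n + 1)), X ^ des w := by
  calc ∑ J ∈ (univ : Finset (Fin n)).powerset, ((youngSubgroup J).index : ℤ[X]) * (X - 1) ^ #J
      = ∑ J ∈ (univ : Finset (Fin n)).powerset, ∑ w : Perm (Fin (n + 1)),
          if J ⊆ ascentSet w then (X - 1) ^ #J else 0 := by
        simp_rw [index_youngSubgroup, natCast_card_filter, sum_mul, ite_mul, one_mul, zero_mul]
    _ = ∑ w : Perm (Fin (n + 1)), ∑ J ∈ (ascentSet w).powerset, (X - 1) ^ #J := by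
        rw [sum_comm]
        refine sum_congr rfl fun w _ => ?_
        rw [← sum_filter]
        congr 1
        ext J
        simp
    _ = ∑ w : Perm (Fin (n + 1)), X ^ des (w * Fin.revPerm) := by
        simp_rw [sum_powerset_sub_one_pow, card_ascentSet_eq_des_mul_revPerm]
    _ = ∑ w : Perm (Fin (n + 1)), X ^ des w :=
        Equiv.sum_comp (Equiv.mulRight Fin.revPerm) fun w => (X : ℤ[X]) ^ des w
end

section
/- For any permutation w \in Sym_n, the number of cosets of (\mathbb{Z}/2\mathbb{Z})(1,1,...,1) in (\mathbb{Z}/2\mathbb{Z})^n that are fixed by the coordinate-permutation action of w equals 2^{c(w)-1} if w has at least one cycle of odd length, and 2^{c(w)} if all cycles of w have even length, where c(w) is the number of cycles of w. -/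
open scoped Classical

/-- The diagonal subgroup of `(ℤ/2ℤ)^n` generated by `(1,1,…,1)`. -/
def diagSubgroup (n : ℕ) : AddSubgroup (Fin n → ZMod 2) :=
  AddSubgroup.closure {fun _ => 1}

/-- The coordinate-permutation action of `w ∈ Sym_n` on `(ℤ/2ℤ)^n`, as an additive
monoid homomorphism: `(w • a) i = a (w⁻¹ i)`. -/
def permCoordHom {n : ℕ} (w : Equiv.Perm (Fin n)) :
    (Fin n → ZMod 2) →+ (Fin n → ZMod 2) :=
  AddMonoidHom.mk' (fun a => a ∘ ⇑w⁻¹) (fun _ _ => rfl)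

/-- The induced action of `w` on the quotient `(ℤ/2ℤ)^n / ⟨(1,…,1)⟩`. -/
def permQuotHom {n : ℕ} (w : Equiv.Perm (Fin n)) :
    (Fin n → ZMod 2) ⧸ diagSubgroup n →+ (Fin n → ZMod 2) ⧸ diagSubgroup n :=
  QuotientAddGroup.map _ _ (permCoordHom w) (by
    rw [diagSubgroup, AddSubgroup.closure_le]
    rintro x rfl
    exact AddSubgroup.subset_closure rfl)

/-- The number of cycles of `w` (fixed points count as cycles of length 1). -/
noncomputable def cycleCount {n : ℕ} (w : Equiv.Perm (Fin n)) : ℕ :=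
  Nat.card (MulAction.orbitRel.Quotient (Subgroup.zpowers w) (Fin n))

/-!
A coset `a + D` is fixed by `w` exactly when `w • a - a ∈ D = {0, 1}`. Counting such `a` through
the map `a ↦ w • a - a` gives `#fixed cosets * #D = #ker * #(range ∩ D)`. The kernel consists
of the vectors constant on cycles, so it has `2 ^ c(w)` elements, and `1` lies in the range iff
some `b` flips its value at every step of `w`, which is possible iff every cycle has even length.
-/

open Function MulAction

namespace Subgroup

variable {G N : Type*} [Group G] [Group N]

@[to_additive]
theorem card_comap (f : G →* N) (K : Subgroup N) :
    Nat.card (K.comap f) = Nat.card f.ker * Nat.card (f.range ⊓ K : Subgroup N) := by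
  have hker : Nat.card (f.domRestrict (K.comap f)).ker = Nat.card f.ker := by
    rw [MonoidHom.ker_domRestrict]
    exact Nat.card_congr (subgroupOfEquivOfLe (ker_le_comap f K)).toEquiv
  rw [← card_mul_index (f.domRestrict (K.comap f)).ker, index_ker, hker,
    MonoidHom.domRestrict_range, map_comap_eq]

end Subgroup

theorem QuotientAddGroup.card_fixedPoints_mul_card {G : Type*} [AddCommGroup G]
    {H : AddSubgroup G} {f : G →+ G} {g : G ⧸ H →+ G ⧸ H} (hg : ∀ a : G, g a = f a) :
    Nat.card {q : G ⧸ H // g q = q} * Nat.card H =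
      Nat.card (f - AddMonoidHom.id G).ker *
        Nat.card ((f - AddMonoidHom.id G).range ⊓ H : AddSubgroup G) := by
  set φ := g - AddMonoidHom.id (G ⧸ H)
  have hfixed : Nat.card {q : G ⧸ H // g q = q} = Nat.card φ.ker :=
    Nat.card_congr (Equiv.subtypeEquivRight fun q => by simp [φ, sub_eq_zero])
  have hcomap : φ.ker.comap (mk' H) = H.comap (f - AddMonoidHom.id G) := by
    ext a
    simp [φ, hg, ← mk_sub]
  rw [← AddSubgroup.card_comap, ← hcomap, AddSubgroup.card_comap, ker_mk', range_mk',
    top_inf_eq, hfixed, mul_comm]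

namespace Equiv.Perm

variable {α : Type*} (σ : Perm α)

theorem orbitRel_zpowers_le_ker_iff {β : Type*} (a : α → β) :
    orbitRel (Subgroup.zpowers σ) α ≤ Setoid.ker a ↔ ∀ x, a (σ x) = a x := by
  refine ⟨fun h x => h (orbitRel_apply.mpr ⟨⟨σ, Subgroup.mem_zpowers σ⟩, rfl⟩), ?_⟩
  rintro h _ x ⟨⟨_, hg⟩, rfl⟩
  obtain ⟨k, rfl⟩ := Subgroup.mem_zpowers_iff.mp hg
  change a ((σ ^ k) x) = a x
  clear hg
  induction k using Int.induction_on generalizing x with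
  | zero => rfl
  | succ k ih => rw [zpow_add_one, mul_apply, ih, h]
  | pred k ih => rw [zpow_sub_one, mul_apply, ih, ← h (σ⁻¹ x), coe_inv, apply_symm_apply]

theorem not_forall_apply_eq_add_one_of_odd {x : α} (hx : Odd (minimalPeriod σ x))
    (b : α → ZMod 2) : ¬ ∀ y, b (σ y) = b y + 1 := by
  intro hb
  have hiterate (k : ℕ) : b (σ^[k] x) = b x + k := by
    induction k with
    | zero => simp
    | succ k ih => rw [iterate_succ_apply', hb, ih]; push_cast; ring
  have hperiod := hiterate (minimalPeriod σ x)
  rw [iterate_minimalPeriod, left_eq_add, ZMod.natCast_eq_zero_iff_even] at hperiod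
  exact Nat.not_even_iff_odd.mpr hx hperiod

/-- Colour `x` by the parity of an exponent `k` with `σ ^ k r = x`, where `r` is a fixed
representative of the cycle of `x`; `k` is determined modulo the (even) cycle length. -/
theorem exists_apply_eq_add_one_of_even (h : ∀ x, Even (minimalPeriod σ x)) :
    ∃ b : α → ZMod 2, ∀ x, b (σ x) = b x + 1 := by
  let r : α → α := fun x => (Quotient.mk (SameCycle.setoid σ) x).out
  have hr (x : α) : σ.SameCycle (r x) x := Quotient.mk_out (s := SameCycle.setoid σ) x
  choose k hk using hr
  refine ⟨fun x => k x, fun x => ?_⟩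
  have hrσ : r (σ x) = r x :=
    congrArg Quotient.out (Quotient.sound (sameCycle_apply_left.mpr (SameCycle.refl σ x)))
  have hk_apply : (σ ^ k (σ x)) (r x) = (σ ^ (k x + 1)) (r x) := by
    rw [← hrσ, hk, add_comm, zpow_one_add, mul_apply, hrσ, hk]
  have hdvd : (minimalPeriod σ (r x) : ℤ) ∣ k (σ x) - (k x + 1) := by
    change (minimalPeriod (σ • ·) (r x) : ℤ) ∣ _
    rw [← zpow_smul_eq_iff_minimalPeriod_dvd, Perm.smul_def, sub_eq_neg_add, zpow_add, mul_apply,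
      hk_apply, zpow_neg, coe_inv, symm_apply_apply]
  have hzero : ((k (σ x) - (k x + 1) : ℤ) : ZMod 2) = 0 :=
    (ZMod.intCast_zmod_eq_zero_iff_dvd _ 2).mpr
      ((Int.natCast_dvd_natCast.mpr (h (r x)).two_dvd).trans hdvd)
  push_cast at hzero
  linear_combination hzero

end Equiv.Perm

section PermCoord

variable {n : ℕ} (w : Equiv.Perm (Fin n))

theorem diagSubgroup_eq_zmultiples : diagSubgroup n = AddSubgroup.zmultiples 1 :=
  (AddSubgroup.zmultiples_eq_closure _).symm

theorem mem_diagSubgroup {x : Fin n → ZMod 2} : x ∈ diagSubgroup n ↔ x = 0 ∨ x = 1 := by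
  rw [diagSubgroup_eq_zmultiples, AddSubgroup.mem_zmultiples_iff]
  constructor
  · rintro ⟨k, rfl⟩
    have hcases : ∀ z : ZMod 2, z = 0 ∨ z = 1 := by decide
    rcases hcases k with hk | hk
    · exact Or.inl (funext fun _ => by simp [hk])
    · exact Or.inr (funext fun _ => by simp [hk])
  · rintro (rfl | rfl)
    exacts [⟨0, zero_zsmul _⟩, ⟨1, one_zsmul _⟩]

theorem card_diagSubgroup [NeZero n] : Nat.card (diagSubgroup n) = 2 := by
  rw [diagSubgroup_eq_zmultiples, Nat.card_zmultiples]
  exact addOrderOf_eq_prime (by ext; rfl) one_ne_zero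

theorem card_ker_permCoordHom_sub_id :
    Nat.card (permCoordHom w - AddMonoidHom.id _).ker = 2 ^ cycleCount w := by
  have hmem (a : Fin n → ZMod 2) : a ∈ (permCoordHom w - AddMonoidHom.id _).ker ↔
      orbitRel (Subgroup.zpowers w) (Fin n) ≤ Setoid.ker a := by
    rw [← Subgroup.zpowers_inv, Equiv.Perm.orbitRel_zpowers_le_ker_iff, AddMonoidHom.mem_ker,
      AddMonoidHom.sub_apply, sub_eq_zero, funext_iff]
    rfl
  rw [Nat.card_congr ((Equiv.subtypeEquivRight hmem).trans (Setoid.liftEquiv _)), Nat.card_fun,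
    Nat.card_zmod]
  rfl

theorem one_mem_range_permCoordHom_sub_id_iff :
    1 ∈ (permCoordHom w - AddMonoidHom.id _).range ↔
      ∃ b : Fin n → ZMod 2, ∀ i, b (w i) = b i + 1 := by
  have hsub : ∀ y z : ZMod 2, y - z = 1 ↔ z = y + 1 := by decide
  refine exists_congr fun b => ?_
  rw [funext_iff, ← w.forall_congr_right]
  simp [permCoordHom, hsub]

theorem range_permCoordHom_sub_id_inf_diagSubgroup_eq_bot {i : Fin n}
    (hi : Odd (minimalPeriod w i)) :
    (permCoordHom w - AddMonoidHom.id _).range ⊓ diagSubgroup n = ⊥ := by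
  refine (AddSubgroup.eq_bot_iff_forall _).mpr fun x ⟨hrange, hdiag⟩ => ?_
  refine (mem_diagSubgroup.mp hdiag).resolve_right ?_
  rintro rfl
  obtain ⟨b, hb⟩ := (one_mem_range_permCoordHom_sub_id_iff w).mp hrange
  exact w.not_forall_apply_eq_add_one_of_odd hi b hb

theorem diagSubgroup_le_range_permCoordHom_sub_id (h : ∀ i, Even (minimalPeriod w i)) :
    diagSubgroup n ≤ (permCoordHom w - AddMonoidHom.id _).range :=
  (AddSubgroup.closure_le _).mpr (Set.singleton_subset_iff.mpr
    ((one_mem_range_permCoordHom_sub_id_iff w).mpr (w.exists_apply_eq_add_one_of_even h)))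

end PermCoord

/-- For `w ∈ Sym_n`, the number of cosets of `(ℤ/2ℤ)(1,…,1)` in `(ℤ/2ℤ)^n` fixed by the
coordinate-permutation action of `w` equals `2^{c(w)-1}` if `w` has a cycle of odd
length, and `2^{c(w)}` if all cycles of `w` have even length. -/
theorem card_fixed_cosets {n : ℕ} (w : Equiv.Perm (Fin n)) :
    ((∃ i : Fin n, Odd (Function.minimalPeriod ⇑w i)) →
      Nat.card {q : (Fin n → ZMod 2) ⧸ diagSubgroup n // permQuotHom w q = q} =
        2 ^ (cycleCount w - 1)) ∧
    ((∀ i : Fin n, Even (Function.minimalPeriod ⇑w i)) →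
      Nat.card {q : (Fin n → ZMod 2) ⧸ diagSubgroup n // permQuotHom w q = q} =
        2 ^ cycleCount w) := by
  have key := QuotientAddGroup.card_fixedPoints_mul_card (g := permQuotHom w) fun _ => rfl
  rw [card_ker_permCoordHom_sub_id] at key
  constructor
  · rintro ⟨i, hi⟩
    have : NeZero n := ⟨i.pos.ne'⟩
    have : Nonempty (orbitRel.Quotient (Subgroup.zpowers w) (Fin n)) := ⟨Quotient.mk'' i⟩
    have hc : 0 < cycleCount w := Nat.card_pos
    rw [range_permCoordHom_sub_id_inf_diagSubgroup_eq_bot w hi, AddSubgroup.card_bot, mul_one,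
      card_diagSubgroup, ← Nat.sub_add_cancel hc, pow_succ] at key
    exact Nat.eq_of_mul_eq_mul_right two_pos key
  · intro heven
    rw [inf_eq_right.mpr (diagSubgroup_le_range_permCoordHom_sub_id w heven)] at key
    exact Nat.eq_of_mul_eq_mul_right Nat.card_pos key
end

section
/- Fix a permutation w \in Sym_n. For m \ge 0, let f_m(w) be the number of m-tuples (A_1,...,A_m) of pairwise disjoint, nonempty, w-stable subsets of \{1,...,n\}, each of even cardinality. If w contains a cycle of even length, then \sum_{m \ge 0} (-1)^m f_m(w) = 0. -/
open scoped Classical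

/-- `tupleCount u m` is the number of `m`-tuples `(A₁,…,A_m)` of pairwise disjoint,
nonempty, `u`-stable subsets of `X`, each of even cardinality. -/
noncomputable def tupleCount {X : Type*} [Fintype X] (u : Equiv.Perm X) (m : ℕ) : ℕ :=
  Nat.card {A : Fin m → Finset X //
    (Pairwise fun j k => Disjoint (A j) (A k)) ∧
    ∀ j, A j ≠ ∅ ∧ (∀ x ∈ A j, u x ∈ A j) ∧ Even (A j).card}

/-!
Let `C` be the orbit of a point on an even cycle of `w`. It is a nonempty `w`-stable set of even
size, and every `w`-stable set either contains `C` or is disjoint from it. Toggling `C` in a tuple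
of blocks — if the first block containing `C` is `C` itself, merge it into the next block (or drop
it when it is the last one); if it is larger, split `C` off in front of it; if no block contains
`C`, append `C` — is an involution on the tuples that changes their length by one, so the tuples
cancel in pairs in the alternating sum.
-/

open Finset Pointwise

namespace DisjointBlocks

variable {α : Type*}

def IsFamily (P : Finset α → Prop) (l : List (Finset α)) : Prop :=
  l.Pairwise Disjoint ∧ ∀ A ∈ l, P A

theorem isFamily_cons {P : Finset α → Prop} {A : Finset α} {l : List (Finset α)} :
    IsFamily P (A :: l) ↔ (∀ B ∈ l, Disjoint A B) ∧ P A ∧ IsFamily P l := by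
  simp only [IsFamily, List.pairwise_cons, List.forall_mem_cons]
  tauto

theorem IsFamily.nodup {P : Finset α → Prop} {l : List (Finset α)}
    (hP : ∀ A, P A → A.Nonempty) (hl : IsFamily P l) : l.Nodup :=
  hl.1.imp_of_mem fun hA _ hAB hAeq => by
    subst hAeq
    exact (hP _ (hl.2 _ hA)).ne_empty (disjoint_self.1 hAB)

theorem finite_setOf_isFamily [Fintype α] {P : Finset α → Prop} (hP : ∀ A, P A → A.Nonempty) :
    {l | IsFamily P l}.Finite :=
  (Set.finite_coe_iff.1 (inferInstanceAs (Finite {l : List (Finset α) // l.Nodup}))).subset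
    fun _ hl => hl.nodup hP

variable [DecidableEq α]

structure IsSplitter (P : Finset α → Prop) (C : Finset α) : Prop where
  mem : P C
  nonempty : ∀ A, P A → A.Nonempty
  union_mem : ∀ B, P B → Disjoint C B → P (C ∪ B)
  sdiff_mem : ∀ A, P A → C ⊂ A → P (A \ C)
  subset_or_disjoint : ∀ A, P A → C ⊆ A ∨ Disjoint C A

def toggle (C : Finset α) : List (Finset α) → List (Finset α)
  | [] => [C]
  | A :: l =>
    if A = C then
      match l with
      | [] => []
      | B :: l' => (C ∪ B) :: l'
    else if C ⊆ A then C :: (A \ C) :: l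
    else A :: toggle C l

theorem neg_one_pow_length_toggle (C : Finset α) (l : List (Finset α)) :
    (-1 : ℤ) ^ (toggle C l).length = -(-1) ^ l.length := by
  fun_induction toggle C l <;> simp_all [pow_succ]

theorem toggle_ne_self (C : Finset α) (l : List (Finset α)) : toggle C l ≠ l := by
  intro h
  have hsign := neg_one_pow_length_toggle C l
  rw [h] at hsign
  exact pow_ne_zero l.length (by norm_num : (-1 : ℤ) ≠ 0) (by linarith)

theorem disjoint_of_mem_toggle {A C : Finset α} {l : List (Finset α)} (hC : Disjoint A C)
    (hl : ∀ B ∈ l, Disjoint A B) : ∀ D ∈ toggle C l, Disjoint A D := by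
  fun_induction toggle C l with
  | case1 => simpa
  | case2 => simp
  | case3 B l => simp_all [disjoint_union_right]
  | case4 B l _ hCB => simp_all [(hl B (by simp)).mono_right sdiff_subset]
  | case5 B l _ _ ih => simp_all

theorem IsFamily.toggle {P : Finset α → Prop} {C : Finset α} {l : List (Finset α)}
    (hC : IsSplitter P C) (hl : IsFamily P l) : IsFamily P (toggle C l) := by
  fun_induction DisjointBlocks.toggle C l with
  | case1 => simpa [IsFamily] using hC.mem
  | case2 => simp [IsFamily]
  | case3 B l =>
    simp only [isFamily_cons, List.forall_mem_cons] at hl ⊢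
    obtain ⟨⟨hCB, hCl⟩, -, hBl, hB, hl⟩ := hl
    exact ⟨fun D hD => disjoint_union_left.2 ⟨hCl D hD, hBl D hD⟩, hC.union_mem B hB hCB, hl⟩
  | case4 A l hAC hCA =>
    simp only [isFamily_cons, List.forall_mem_cons] at hl ⊢
    obtain ⟨hAl, hA, hl⟩ := hl
    refine ⟨⟨disjoint_sdiff, fun D hD => (hAl D hD).mono_left hCA⟩, hC.mem,
      fun D hD => (hAl D hD).mono_left sdiff_subset, hC.sdiff_mem A hA ?_, hl⟩
    exact ssubset_of_subset_of_ne hCA (Ne.symm hAC)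
  | case5 A l _ hCA ih =>
    rw [isFamily_cons] at hl ⊢
    obtain ⟨hAl, hA, hl⟩ := hl
    have hAC : Disjoint A C := ((hC.subset_or_disjoint A hA).resolve_left hCA).symm
    exact ⟨disjoint_of_mem_toggle hAC hAl, hA, ih hl⟩

theorem toggle_toggle {C : Finset α} {l : List (Finset α)} (hl : l.Pairwise Disjoint)
    (hne : ∀ A ∈ l, A.Nonempty) : toggle C (toggle C l) = l := by
  fun_induction toggle C l with
  | case1 => simp [toggle]
  | case2 => simp [toggle]
  | case3 B l =>
    have hCB : Disjoint C B := (List.pairwise_cons.1 hl).1 B (by simp)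
    have hB : B.Nonempty := hne B (by simp)
    have hCB_ne : C ∪ B ≠ C := fun h =>
      hB.ne_empty (disjoint_self.1 (hCB.symm.mono_right (union_eq_left.1 h)))
    simp [toggle, hCB_ne, union_sdiff_cancel_left hCB]
  | case4 A l hAC hCA =>
    simp [toggle, union_sdiff_of_subset hCA]
  | case5 A l hAC hCA ih =>
    simp [toggle, hAC, hCA, ih hl.of_cons (fun D hD => hne D (by simp [hD]))]

theorem IsSplitter.sum_neg_one_pow_length_eq_zero {P : Finset α → Prop} {C : Finset α}
    (hC : IsSplitter P C) {S : Finset (List (Finset α))} (hS : ∀ l, l ∈ S ↔ IsFamily P l) :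
    ∑ l ∈ S, (-1 : ℤ) ^ l.length = 0 := by
  refine sum_involution (fun l _ => toggle C l)
    (fun l _ => by rw [neg_one_pow_length_toggle, add_neg_cancel])
    (fun l _ _ => toggle_ne_self C l) (fun l hl => (hS _).2 (((hS l).1 hl).toggle hC))
    (fun l hl => ?_)
  have hl := (hS l).1 hl
  exact toggle_toggle hl.1 fun A hA => hC.nonempty A (hl.2 A hA)

end DisjointBlocks

theorem finsum_mul_card_filter {ι κ R : Type*} [DecidableEq κ] [CommSemiring R] (s : Finset ι)
    (g : ι → κ) (f : κ → R) : ∑ᶠ b, f b * #{a ∈ s | g a = b} = ∑ a ∈ s, f (g a) := by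
  rw [sum_comp, finsum_eq_sum_of_support_subset _ (s := s.image g)]
  · simp [mul_comm]
  · intro b hb
    obtain ⟨a, ha⟩ := card_ne_zero.1 fun h : #{a ∈ s | g a = b} = 0 => hb (by simp [h])
    rw [mem_filter] at ha
    exact ha.2 ▸ mem_image_of_mem g ha.1

namespace Equiv.Perm

open DisjointBlocks

variable {X : Type*}

def IsEvenStable (u : Perm X) (A : Finset X) : Prop :=
  A ≠ ∅ ∧ (∀ x ∈ A, u x ∈ A) ∧ Even #A

theorem smul_finset_eq_self_of_forall_apply_mem [DecidableEq X] {u : Perm X} {A : Finset X}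
    (hA : ∀ x ∈ A, u x ∈ A) : u • A = A :=
  eq_of_subset_of_card_le
    (fun _ hy => by obtain ⟨x, hx, rfl⟩ := mem_smul_finset.1 hy; exact hA x hx)
    (card_smul_finset u A).ge

theorem apply_mem_of_mem_zpowers [DecidableEq X] {u g : Perm X} {A : Finset X}
    (hA : ∀ x ∈ A, u x ∈ A) (hg : g ∈ Subgroup.zpowers u) {x : X} (hx : x ∈ A) : g x ∈ A := by
  have hstab : Subgroup.zpowers u ≤ MulAction.stabilizer (Perm X) A :=
    Subgroup.zpowers_le.2 (smul_finset_eq_self_of_forall_apply_mem hA)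
  rw [← MulAction.mem_stabilizer_iff.1 (hstab hg)]
  exact smul_mem_smul_finset hx

theorem IsEvenStable.union [DecidableEq X] {u : Perm X} {A B : Finset X}
    (hA : IsEvenStable u A) (hB : IsEvenStable u B) (hAB : _root_.Disjoint A B) :
    IsEvenStable u (A ∪ B) := by
  refine ⟨by simp [hA.1], fun x hx => ?_, ?_⟩
  · rcases mem_union.1 hx with h | h
    · exact mem_union_left _ (hA.2.1 x h)
    · exact mem_union_right _ (hB.2.1 x h)
  · rw [card_union_of_disjoint hAB]
    exact hA.2.2.add hB.2.2

theorem IsEvenStable.sdiff [DecidableEq X] {u : Perm X} {A C : Finset X}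
    (hA : IsEvenStable u A) (hC : IsEvenStable u C) (hCA : C ⊂ A) :
    IsEvenStable u (A \ C) := by
  refine ⟨by simpa [sdiff_eq_empty_iff_subset] using not_subset_of_ssubset hCA,
    fun x hx => ?_, ?_⟩
  · rw [mem_sdiff] at hx ⊢
    refine ⟨hA.2.1 x hx.1, fun hux => hx.2 ?_⟩
    rwa [← smul_finset_eq_self_of_forall_apply_mem hC.2.1, ← Perm.smul_def,
      smul_mem_smul_finset_iff] at hux
  · rw [card_sdiff_of_subset hCA.subset, Nat.even_sub (card_le_card hCA.subset)]
    exact iff_of_true hA.2.2 hC.2.2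

theorem orbit_zpowers_subset_or_disjoint [DecidableEq X] [Fintype X] {u : Perm X}
    {A : Finset X} (hA : ∀ x ∈ A, u x ∈ A) (i : X) :
    (MulAction.orbit (Subgroup.zpowers u) i).toFinset ⊆ A ∨
      _root_.Disjoint (MulAction.orbit (Subgroup.zpowers u) i).toFinset A := by
  refine or_iff_not_imp_right.2 fun h => ?_
  obtain ⟨x, hxi, hxA⟩ := not_disjoint_iff.1 h
  intro y hyi
  rw [Set.mem_toFinset, ← MulAction.orbit_eq_iff.2 (Set.mem_toFinset.1 hxi)] at hyi
  obtain ⟨g, rfl⟩ := hyi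
  exact apply_mem_of_mem_zpowers hA g.2 hxA

theorem isEvenStable_orbit_zpowers [Fintype X] (u : Perm X) (i : X)
    (hi : Even (Function.minimalPeriod u i)) :
    IsEvenStable u (MulAction.orbit (Subgroup.zpowers u) i).toFinset := by
  refine ⟨ne_empty_of_mem (Set.mem_toFinset.2 (MulAction.mem_orbit_self i)), fun x hx => ?_, ?_⟩
  · rw [Set.mem_toFinset] at hx ⊢
    exact MulAction.mem_orbit_of_mem_orbit ⟨u, Subgroup.mem_zpowers u⟩ hx
  · rwa [Set.toFinset_card, ← MulAction.minimalPeriod_eq_card]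

theorem isSplitter_orbit_zpowers [DecidableEq X] [Fintype X] (u : Perm X) (i : X)
    (hi : Even (Function.minimalPeriod u i)) :
    IsSplitter (IsEvenStable u) (MulAction.orbit (Subgroup.zpowers u) i).toFinset where
  mem := isEvenStable_orbit_zpowers u i hi
  nonempty _ hA := nonempty_iff_ne_empty.2 hA.1
  union_mem _ hB hCB := (isEvenStable_orbit_zpowers u i hi).union hB hCB
  sdiff_mem _ hA hCA := hA.sdiff (isEvenStable_orbit_zpowers u i hi) hCA
  subset_or_disjoint _ hA := orbit_zpowers_subset_or_disjoint hA.2.1 i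

theorem tupleCount_eq_card_filter [Fintype X] (u : Perm X) {S : Finset (List (Finset X))}
    (hS : ∀ l, l ∈ S ↔ IsFamily (IsEvenStable u) l) (m : ℕ) :
    tupleCount u m = #{l ∈ S | l.length = m} := by
  rw [tupleCount, ← Nat.card_eq_finsetCard]
  refine Nat.card_congr (((Equiv.vectorEquivFin _ m).symm.subtypeEquiv fun A => ?_).trans
    ((Equiv.subtypeSubtypeEquivSubtypeInter _ (IsFamily (IsEvenStable u))).trans
      (Equiv.subtypeEquivRight fun l => ?_)))
  · have : Std.Symm fun j k => _root_.Disjoint (A j) (A k) := ⟨fun _ _ h => h.symm⟩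
    have hval : Subtype.val ((Equiv.vectorEquivFin _ m).symm A :
        {l : List (Finset X) // l.length = m}) = List.ofFn A := List.Vector.toList_ofFn A
    rw [hval]
    simp [IsFamily, IsEvenStable, pairwise_iff_lt]
  · simp [hS, and_comm]

theorem finsum_neg_one_pow_mul_tupleCount [Fintype X] (u : Perm X)
    {S : Finset (List (Finset X))} (hS : ∀ l, l ∈ S ↔ IsFamily (IsEvenStable u) l) :
    ∑ᶠ m : ℕ, ((-1 : ℤ) ^ m * tupleCount u m) = ∑ l ∈ S, (-1 : ℤ) ^ l.length := by
  simp_rw [tupleCount_eq_card_filter u hS]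
  exact finsum_mul_card_filter S List.length _

end Equiv.Perm

/-- If `w ∈ Sym_n` contains a cycle of even length, then
`∑_{m ≥ 0} (-1)^m f_m(w) = 0`, where `f_m(w)` counts `m`-tuples of pairwise disjoint
nonempty `w`-stable even-cardinality subsets of `{1,…,n}`. -/
theorem alternating_sum_tupleCount_eq_zero {n : ℕ} (w : Equiv.Perm (Fin n))
    (hw : ∃ i : Fin n, Even (Function.minimalPeriod ⇑w i)) :
    ∑ᶠ m : ℕ, ((-1 : ℤ) ^ m * tupleCount w m) = 0 := by
  obtain ⟨i, hi⟩ := hw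
  have hC := w.isSplitter_orbit_zpowers i hi
  have hS := fun l => (DisjointBlocks.finite_setOf_isFamily hC.nonempty).mem_toFinset (a := l)
  rw [w.finsum_neg_one_pow_mul_tupleCount hS]
  exact hC.sum_neg_one_pow_length_eq_zero hS
end

section
/- Fix w \in Sym_n with a cycle C of even length, and let y be the permutation induced by w on the complement of C. With f_m as the number of m-tuples of pairwise disjoint nonempty w-stable even-cardinality subsets, the recursion f_m(w) = m f_{m-1}(y) + (m+1) f_m(y) holds for all m \ge 0, where f_{-1}(y) = 0. -/
open scoped Classical

/-! A `w`-stable set either contains the orbit `C` or is disjoint from it, so in a tuple counted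
by `f_m(w)` at most one entry meets `C`. If none does, the tuple lives on the complement of `C`:
`f_m(y)` tuples. If the `j`-th entry strictly contains `C`, removing `C` from it leaves an arbitrary
`m`-tuple for `y`, because `#C` is even: `m f_m(y)` tuples. If the `j`-th entry is `C` itself,
deleting it leaves an arbitrary `(m-1)`-tuple for `y`: `m f_{m-1}(y)` tuples. -/

open Finset Function Equiv

variable {X : Type*} {u : Perm X}

def IsEvenBlock (u : Perm X) (s : Finset X) : Prop :=
  s ≠ ∅ ∧ (∀ x ∈ s, u x ∈ s) ∧ Even #s

def IsBlockTuple (u : Perm X) {m : ℕ} (A : Fin m → Finset X) : Prop :=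
  Pairwise (Disjoint on A) ∧ ∀ j, IsEvenBlock u (A j)

noncomputable def blockTuples [Fintype X] (u : Perm X) (m : ℕ) : Finset (Fin m → Finset X) :=
  {A | IsBlockTuple u A}

theorem mem_blockTuples [Fintype X] {m : ℕ} {A : Fin m → Finset X} :
    A ∈ blockTuples u m ↔ IsBlockTuple u A := by
  simp [blockTuples]

theorem tupleCount_eq_card_blockTuples [Fintype X] (u : Perm X) (m : ℕ) :
    tupleCount u m = #(blockTuples u m) := by
  rw [tupleCount, blockTuples, Nat.card_eq_fintype_card, Fintype.card_subtype]
  congr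

theorem apply_mem_iff_of_forall_apply_mem {s : Finset X} (hs : ∀ x ∈ s, u x ∈ s) (x : X) :
    u x ∈ s ↔ x ∈ s := by
  have hmap : s.map u.toEmbedding = s := map_eq_of_subset fun y hy => by
    obtain ⟨x, hx, rfl⟩ := mem_map.1 hy
    exact hs x hx
  conv_lhs => rw [← hmap]
  exact mem_map' u.toEmbedding

section DecidableEq

variable [DecidableEq X] {s t : Finset X}

theorem IsEvenBlock.union (hs : IsEvenBlock u s) (ht : IsEvenBlock u t) (hst : Disjoint s t) :
    IsEvenBlock u (s ∪ t) := by
  refine ⟨by simp [hs.1], fun x hx => ?_, ?_⟩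
  · rcases mem_union.1 hx with hx | hx
    · exact mem_union_left _ (hs.2.1 x hx)
    · exact mem_union_right _ (ht.2.1 x hx)
  · rw [card_union_of_disjoint hst]
    exact hs.2.2.add ht.2.2

theorem IsEvenBlock.sdiff (hs : IsEvenBlock u s) (ht : IsEvenBlock u t) (hts : t ⊂ s) :
    IsEvenBlock u (s \ t) := by
  refine ⟨(sdiff_nonempty.2 (not_subset_of_ssubset hts)).ne_empty, fun x hx => ?_, ?_⟩
  · rw [mem_sdiff] at hx ⊢
    rw [apply_mem_iff_of_forall_apply_mem ht.2.1]
    exact ⟨hs.2.1 x hx.1, hx.2⟩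
  · rw [card_sdiff_of_subset hts.subset, Nat.even_sub (card_le_card hts.subset)]
    exact iff_of_true hs.2.2 ht.2.2

end DecidableEq

def IsOrbit (u : Perm X) (C : Finset X) : Prop :=
  ∃ i, ∀ x, x ∈ C ↔ u.SameCycle i x

namespace IsOrbit

variable {C s : Finset X} (hC : IsOrbit u C)
include hC

theorem nonempty : C.Nonempty :=
  let ⟨i, hi⟩ := hC
  ⟨i, (hi i).2 (Perm.SameCycle.refl u i)⟩

theorem apply_mem_iff (x : X) : u x ∈ C ↔ x ∈ C :=
  let ⟨_, hi⟩ := hC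
  by rw [hi, hi, Perm.sameCycle_apply_right]

theorem isEvenBlock (heven : Even #C) : IsEvenBlock u C :=
  ⟨hC.nonempty.ne_empty, fun x => (hC.apply_mem_iff x).2, heven⟩

theorem subset_of_not_disjoint [Finite X] (hs : ∀ x ∈ s, u x ∈ s) (h : ¬Disjoint s C) :
    C ⊆ s := by
  obtain ⟨i, hi⟩ := hC
  obtain ⟨x, hxs, hxC⟩ := not_disjoint_iff.1 h
  have hpow : ∀ k : ℕ, (u ^ k) x ∈ s := by
    intro k
    induction k with
    | zero => exact hxs
    | succ k ih => rw [pow_succ', Perm.mul_apply]; exact hs _ ih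
  intro c hc
  obtain ⟨k, -, rfl⟩ := (((hi x).1 hxC).symm.trans ((hi c).1 hc)).exists_pow_eq'
  exact hpow k

end IsOrbit

theorem isOrbit_support_cycleOf [Fintype X] [DecidableEq X] {i : X} (hi : u i ≠ i) :
    IsOrbit u (u.cycleOf i).support :=
  ⟨i, fun x => by rw [Perm.mem_support_cycleOf_iff, Perm.mem_support, and_iff_left hi]⟩

section Subtype

variable {p : X → Prop} (h : ∀ x, p (u x) ↔ p x)

theorem isEvenBlock_map_subtype {s : Finset {x // p x}} :
    IsEvenBlock u (s.map (Embedding.subtype p)) ↔ IsEvenBlock (u.subtypePerm h) s := by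
  have hmem (a : {x // p x}) : u a ∈ s.map (Embedding.subtype p) ↔ u.subtypePerm h a ∈ s :=
    mem_map' (Embedding.subtype p) (a := u.subtypePerm h a)
  simp only [IsEvenBlock, ne_eq, map_eq_empty, card_map, forall_mem_map, Embedding.subtype_apply,
    hmem]

theorem isBlockTuple_map_subtype {m : ℕ} {B : Fin m → Finset {x // p x}} :
    IsBlockTuple u (fun j => (B j).map (Embedding.subtype p)) ↔
      IsBlockTuple (u.subtypePerm h) B := by
  have hdisj : (Disjoint on fun j => (B j).map (Embedding.subtype p)) = (Disjoint on B) := by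
    funext j k
    exact propext (disjoint_map _)
  simp only [IsBlockTuple, hdisj, isEvenBlock_map_subtype h]

theorem tupleCount_subtypePerm [Fintype X] [DecidablePred p] (m : ℕ) :
    tupleCount (u.subtypePerm h) m = #{A ∈ blockTuples u m | ∀ j, ∀ x ∈ A j, p x} := by
  rw [tupleCount_eq_card_blockTuples]
  refine card_nbij' (fun B j => (B j).map (Embedding.subtype p)) (fun A j => (A j).subtype p)
    (fun B hB => ?_) (fun A hA => ?_) (fun B _ => ?_) (fun A hA => ?_)
  · rw [mem_coe, mem_blockTuples] at hB
    rw [mem_coe, mem_filter, mem_blockTuples, isBlockTuple_map_subtype h]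
    refine ⟨hB, fun j x hx => ?_⟩
    obtain ⟨y, -, rfl⟩ := mem_map.1 hx
    exact y.2
  · rw [mem_coe, mem_filter, mem_blockTuples] at hA
    rw [mem_coe, mem_blockTuples, ← isBlockTuple_map_subtype h]
    simpa only [subtype_map_of_mem (hA.2 _)] using hA.1
  · funext j
    ext x
    simp [x.2]
  · rw [mem_coe, mem_filter] at hA
    funext j
    exact subtype_map_of_mem (hA.2 j)

end Subtype

section Pairwise

variable {α : Type*} [PartialOrder α] [OrderBot α]

theorem pairwise_disjoint_update {ι : Type*} [DecidableEq ι] {f : ι → α}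
    (hf : Pairwise (Disjoint on f)) {j : ι} {a : α} (ha : ∀ k ≠ j, Disjoint a (f k)) :
    Pairwise (Disjoint on update f j a) := by
  intro k l hkl
  rcases eq_or_ne k j with rfl | hk
  · rw [onFun, update_self, update_of_ne hkl.symm]
    exact ha l hkl.symm
  rcases eq_or_ne l j with rfl | hl
  · rw [onFun, update_self, update_of_ne hk]
    exact (ha k hk).symm
  · rw [onFun, update_of_ne hk, update_of_ne hl]
    exact hf hkl

theorem pairwise_disjoint_insertNth {m : ℕ} {f : Fin m → α} (hf : Pairwise (Disjoint on f))
    {j : Fin (m + 1)} {a : α} (ha : ∀ k, Disjoint a (f k)) :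
    Pairwise (Disjoint on j.insertNth a f) := by
  intro k l hkl
  cases k using j.succAboveCases <;> cases l using j.succAboveCases
  · exact absurd rfl hkl
  · simpa [onFun] using ha _
  · simpa [onFun] using (ha _).symm
  · simpa [onFun] using hf (ne_of_apply_ne _ hkl)

end Pairwise

theorem IsBlockTuple.disjoint_of_subset {m : ℕ} {A : Fin m → Finset X} (hA : IsBlockTuple u A)
    {C : Finset X} {j k : Fin m} (hj : C ⊆ A j) (hk : k ≠ j) : Disjoint (A k) C :=
  (hA.1 hk).mono_right hj

section Orbit

variable [Fintype X] [DecidableEq X] {C : Finset X} {m : ℕ}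

theorem card_blockTuples_filter_ssubset (hC : IsOrbit u C) (heven : Even #C) (j : Fin m) :
    #{A ∈ blockTuples u m | C ⊂ A j} = #{A ∈ blockTuples u m | ∀ k, Disjoint (A k) C} := by
  refine card_nbij' (fun A k => A k \ C) (fun B => update B j (B j ∪ C))
    (fun A hA => ?_) (fun B hB => ?_) (fun A hA => ?_) (fun B hB => ?_)
  all_goals simp only [mem_coe, mem_filter, mem_blockTuples] at *
  · refine ⟨⟨fun k l hkl => (hA.1.1 hkl).mono sdiff_subset sdiff_subset, fun k => ?_⟩,
      fun k => sdiff_disjoint⟩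
    change IsEvenBlock u (A k \ C)
    rcases eq_or_ne k j with rfl | hk
    · exact (hA.1.2 k).sdiff (hC.isEvenBlock heven) hA.2
    · rw [sdiff_eq_self_of_disjoint (hA.1.disjoint_of_subset hA.2.subset hk)]
      exact hA.1.2 k
  · refine ⟨⟨pairwise_disjoint_update hB.1.1 fun k hk =>
      disjoint_union_left.2 ⟨hB.1.1 hk.symm, (hB.2 k).symm⟩, fun k => ?_⟩, ?_⟩
    · rcases eq_or_ne k j with rfl | hk
      · rw [update_self]
        exact (hB.1.2 k).union (hC.isEvenBlock heven) (hB.2 k)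
      · rw [update_of_ne hk]
        exact hB.1.2 k
    · obtain ⟨b, hb⟩ := nonempty_iff_ne_empty.2 (hB.1.2 j).1
      rw [update_self]
      exact ssubset_of_subset_not_superset subset_union_right fun hsub =>
        disjoint_left.1 (hB.2 j) hb (hsub (mem_union_left _ hb))
  · funext k
    rcases eq_or_ne k j with rfl | hk
    · rw [update_self, sdiff_union_of_subset hA.2.subset]
    · rw [update_of_ne hk, sdiff_eq_self_of_disjoint (hA.1.disjoint_of_subset hA.2.subset hk)]
  · funext k
    rcases eq_or_ne k j with rfl | hk
    · rw [update_self, union_sdiff_cancel_right (hB.2 k)]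
    · rw [update_of_ne hk, sdiff_eq_self_of_disjoint (hB.2 k)]

theorem card_blockTuples_filter_eq (hC : IsOrbit u C) (heven : Even #C) (j : Fin (m + 1)) :
    #{A ∈ blockTuples u (m + 1) | A j = C} =
      #{A ∈ blockTuples u m | ∀ k, Disjoint (A k) C} := by
  refine card_nbij' j.removeNth (fun B => j.insertNth C B) (fun A hA => ?_) (fun B hB => ?_)
    (fun A hA => ?_) (fun B _ => Fin.removeNth_insertNth (α := fun _ => Finset X) j C B)
  all_goals simp only [mem_coe, mem_filter, mem_blockTuples] at *
  · refine ⟨⟨hA.1.1.comp_of_injective Fin.succAbove_right_injective, fun k => hA.1.2 _⟩,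
      fun k => ?_⟩
    rw [← hA.2]
    exact hA.1.1 (Fin.succAbove_ne j k)
  · refine ⟨⟨pairwise_disjoint_insertNth hB.1.1 fun k => (hB.2 k).symm, ?_⟩,
      Fin.insertNth_apply_same ..⟩
    rw [j.forall_iff_succAbove, Fin.insertNth_apply_same]
    exact ⟨hC.isEvenBlock heven, fun k => by simpa using hB.1.2 k⟩
  · rw [← hA.2]
    exact Fin.insertNth_self_removeNth j A

theorem card_blockTuples_eq_add_sum (hC : IsOrbit u C) :
    #(blockTuples u m) = #{A ∈ blockTuples u m | ∀ k, Disjoint (A k) C} +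
      ∑ j, #{A ∈ blockTuples u m | C ⊆ A j} := by
  have hnone : {A ∈ blockTuples u m | ¬∃ j, C ⊆ A j} =
      {A ∈ blockTuples u m | ∀ k, Disjoint (A k) C} := by
    refine filter_congr fun A hA => ⟨fun h k => ?_, fun h ⟨k, hk⟩ => ?_⟩
    · by_contra hk
      exact h ⟨k, hC.subset_of_not_disjoint ((mem_blockTuples.1 hA).2 k).2.1 hk⟩
    · exact hC.nonempty.ne_empty ((h k).eq_bot_of_ge hk)
  have hsome : {A ∈ blockTuples u m | ∃ j, C ⊆ A j} =
      univ.biUnion fun j => {A ∈ blockTuples u m | C ⊆ A j} := by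
    ext A
    simp
  rw [← card_filter_add_card_filter_not (fun A => ∃ j, C ⊆ A j), hnone, hsome, card_biUnion,
    add_comm]
  intro j _ k _ hjk
  rw [onFun, disjoint_filter]
  intro A hA hj hk
  exact hC.nonempty.ne_empty
    (((mem_blockTuples.1 hA).disjoint_of_subset hj hjk.symm).eq_bot_of_ge hk)

theorem card_blockTuples_filter_subset (j : Fin m) :
    #{A ∈ blockTuples u m | C ⊆ A j} =
      #{A ∈ blockTuples u m | C ⊂ A j} + #{A ∈ blockTuples u m | A j = C} := by
  rw [← card_filter_add_card_filter_not (fun A => A j ≠ C), filter_filter, filter_filter]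
  congr 2 <;> refine filter_congr fun A _ => ?_
  · rw [ssubset_iff_subset_ne, ne_comm]
  · rw [not_not]
    exact and_iff_right_of_imp fun h => h.ge

theorem card_blockTuples_of_isOrbit (hC : IsOrbit u C) (heven : Even #C) :
    #(blockTuples u m) = m * #{A ∈ blockTuples u (m - 1) | ∀ k, Disjoint (A k) C} +
      (m + 1) * #{A ∈ blockTuples u m | ∀ k, Disjoint (A k) C} := by
  simp only [card_blockTuples_eq_add_sum hC, card_blockTuples_filter_subset,
    card_blockTuples_filter_ssubset hC heven, sum_add_distrib, sum_const, card_univ,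
    Fintype.card_fin, smul_eq_mul]
  cases m with
  | zero => simp
  | succ m =>
    dsimp only [Nat.add_one_sub_one]
    simp only [card_blockTuples_filter_eq hC heven, sum_const, card_univ, Fintype.card_fin,
      smul_eq_mul]
    ring

end Orbit

/-- Let `C` be the support of an even-length cycle of `w ∈ Sym_n`, and let `y` be the
permutation induced by `w` on the complement of `C`.  Then
`f_m(w) = m f_{m-1}(y) + (m+1) f_m(y)` for all `m ≥ 0` (with `f_{-1}(y) = 0`). -/
theorem tupleCount_recursion {n : ℕ} (w : Equiv.Perm (Fin n)) (C : Finset (Fin n))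
    (hcyc : ∃ i : Fin n, w i ≠ i ∧ C = (w.cycleOf i).support)
    (heven : Even C.card)
    (hstab : ∀ x : Fin n, x ∉ C ↔ w x ∉ C) (m : ℕ) :
    tupleCount w m =
      m * tupleCount (w.subtypePerm (p := fun x => x ∉ C) fun x => (hstab x).symm) (m - 1) +
        (m + 1) * tupleCount (w.subtypePerm (p := fun x => x ∉ C) fun x => (hstab x).symm) m := by
  obtain ⟨i, hi, rfl⟩ := hcyc
  simp only [tupleCount_subtypePerm, ← disjoint_left]
  rw [tupleCount_eq_card_blockTuples,
    card_blockTuples_of_isOrbit (isOrbit_support_cycleOf hi) heven]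
end
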